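/- arXiv:math-ph/0202005 — 2 statements merged into one kernel-verified Lean document; each statement's English description precedes it below -/
import Mathlib

section
/- A 2-covariant tensor T at a point x of a Lorentzian vector space satisfies the dominant property (T(k₁,k₂) ≥ 0 for all causal future-directed vectors k₁, k₂) if and only if in every orthonormal basis its components satisfy T₀₀ ≥ |T_{ij}| for all index pairs (i,j), where the 0-index denotes the timelike component. -/
/-- The Minkowski inner product of signature (+,-,...,-) on `Fin (n+1) → ℝ`,
    index `0` being the timelike component. -/
def mink (n : ℕ) (v w : Fin (n + 1) → ℝ) : ℝ :=
  v 0 * w 0 - ∑ i : Fin n, v i.succ * w i.succ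

/-- A vector is causal and future directed: nonnegative Lorentzian norm and
    positive time component (hence nonzero). -/
def causalFD (n : ℕ) (v : Fin (n + 1) → ℝ) : Prop :=
  0 ≤ mink n v v ∧ 0 < v 0

/-- An orthonormal basis of Minkowski space with `b 0` unit timelike future directed
    and the `b i`, `i ≠ 0`, unit spacelike. -/
def IsONBasis (n : ℕ) (b : Module.Basis (Fin (n + 1)) ℝ (Fin (n + 1) → ℝ)) : Prop :=
  mink n (b 0) (b 0) = 1 ∧ (∀ i, i ≠ 0 → mink n (b i) (b i) = -1) ∧
    (∀ i j, i ≠ j → mink n (b i) (b j) = 0) ∧ 0 < (b 0) 0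

/-!
(⇒) For an orthonormal basis `b`, the vectors `b 0 ± b i` lie in the closed future cone, and
`T(b₀ + bᵢ, b₀ + bⱼ) + T(b₀ - bᵢ, b₀ - bⱼ) = 2 (T₀₀ + Tᵢⱼ)`,
`T(b₀ + bᵢ, b₀ - bⱼ) + T(b₀ - bᵢ, b₀ + bⱼ) = 2 (T₀₀ - Tᵢⱼ)`.

(⇐) For `k₁` timelike, pick an orthonormal basis with `b₀ ∥ k₁` and `k₂ ∈ span (b₀, b₁)`, so that
`k₂ = a b₀ + r b₁` with `a ≥ r ≥ 0`; then `T(b₀, k₂) ≥ (a - r) T₀₀ ≥ 0`. Such a basis is the image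
of the standard one under at most two Minkowski reflections. A null `k₁` is the limit of the
timelike vectors `k₁ + ε e₀`.
-/

open Finset

lemma nonneg_of_forall_pos_nonneg_add_mul {a b : ℝ} (h : ∀ ε > 0, 0 ≤ a + ε * b) : 0 ≤ a := by
  have hlim : Filter.Tendsto (fun ε : ℝ => a + ε * b) (nhdsWithin 0 (Set.Ioi 0)) (nhds a) :=
    ((by fun_prop : Continuous fun ε : ℝ => a + ε * b).tendsto' 0 a (by simp)).mono_left
      nhdsWithin_le_nhds
  exact ge_of_tendsto hlim (eventually_nhdsWithin_of_forall h)

section Minkowski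

variable {n : ℕ}

lemma mink_comm (v w : Fin (n + 1) → ℝ) : mink n v w = mink n w v := by
  simp only [mink, mul_comm]

lemma mink_add_left (x x' y : Fin (n + 1) → ℝ) :
    mink n (x + x') y = mink n x y + mink n x' y := by
  simp only [mink, Pi.add_apply, add_mul, sum_add_distrib]; ring

lemma mink_smul_left (c : ℝ) (x y : Fin (n + 1) → ℝ) :
    mink n (c • x) y = c * mink n x y := by
  simp only [mink, Pi.smul_apply, smul_eq_mul, mul_sub, mul_sum, mul_assoc]

lemma mink_add_right (x y y' : Fin (n + 1) → ℝ) :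
    mink n x (y + y') = mink n x y + mink n x y' := by
  rw [mink_comm, mink_add_left, mink_comm y, mink_comm y']

lemma mink_smul_right (c : ℝ) (x y : Fin (n + 1) → ℝ) :
    mink n x (c • y) = c * mink n x y := by
  rw [mink_comm, mink_smul_left, mink_comm]

def minkowskiForm (n : ℕ) : LinearMap.BilinForm ℝ (Fin (n + 1) → ℝ) :=
  LinearMap.mk₂ ℝ (mink n) mink_add_left mink_smul_left mink_add_right mink_smul_right

@[simp] lemma minkowskiForm_apply (v w : Fin (n + 1) → ℝ) : minkowskiForm n v w = mink n v w :=
  rfl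

lemma mink_sub_left (x x' y : Fin (n + 1) → ℝ) :
    mink n (x - x') y = mink n x y - mink n x' y :=
  LinearMap.map_sub₂ (minkowskiForm n) x x' y

lemma mink_sub_right (x y y' : Fin (n + 1) → ℝ) :
    mink n x (y - y') = mink n x y - mink n x y' :=
  (minkowskiForm n x).map_sub y y'

lemma mink_neg_left (x y : Fin (n + 1) → ℝ) : mink n (-x) y = -mink n x y :=
  LinearMap.map_neg₂ (minkowskiForm n) x y

lemma mink_neg_right (x y : Fin (n + 1) → ℝ) : mink n x (-y) = -mink n x y :=
  (minkowskiForm n x).map_neg y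

lemma mink_single_zero_left (x : Fin (n + 1) → ℝ) : mink n (Pi.single 0 1) x = x 0 := by
  simp [mink, Fin.succ_ne_zero]

lemma mink_single_succ_left (j : Fin n) (x : Fin (n + 1) → ℝ) :
    mink n (Pi.single j.succ 1) x = -x j.succ := by
  simp [mink, Pi.single_apply, (Fin.succ_ne_zero j).symm]

def minkowskiMetric (n : ℕ) (i j : Fin (n + 1)) : ℝ :=
  if i = j then (if i = 0 then 1 else -1) else 0

lemma mink_single_single (i j : Fin (n + 1)) :
    mink n (Pi.single i 1) (Pi.single j 1) = minkowskiMetric n i j := by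
  cases i using Fin.cases with
  | zero =>
    rw [mink_single_zero_left]
    by_cases h : j = 0 <;> simp [minkowskiMetric, h, eq_comm]
  | succ i =>
    rw [mink_single_succ_left]
    by_cases h : j = i.succ <;> simp [minkowskiMetric, h, eq_comm, Fin.succ_ne_zero]

lemma isONBasis_iff (b : Module.Basis (Fin (n + 1)) ℝ (Fin (n + 1) → ℝ)) :
    IsONBasis n b ↔ (∀ i j, mink n (b i) (b j) = minkowskiMetric n i j) ∧ 0 < b 0 0 := by
  refine ⟨fun ⟨h00, hii, hij, hb0⟩ => ⟨fun i j => ?_, hb0⟩, fun ⟨h, hb0⟩ => ⟨?_, ?_, ?_, hb0⟩⟩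
  · unfold minkowskiMetric
    split_ifs with h h'
    · subst h h'; exact h00
    · subst h; exact hii i h'
    · exact hij i j h
  · simp [h, minkowskiMetric]
  · intro i hi; simp [h, minkowskiMetric, hi]
  · intro i j hij; simp [h, minkowskiMetric, hij]

end Minkowski

section Causal

variable {n : ℕ} {u v w x : Fin (n + 1) → ℝ}

lemma mink_self (v : Fin (n + 1) → ℝ) : mink n v v = v 0 ^ 2 - ∑ i : Fin n, v i.succ ^ 2 := by
  simp only [mink, sq]

lemma eq_zero_of_time_eq_zero (hv : 0 ≤ mink n v v) (h0 : v 0 = 0) : v = 0 := by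
  have hsum : ∑ i : Fin n, v i.succ ^ 2 = 0 := by
    rw [mink_self, h0] at hv
    exact le_antisymm (by linarith) (sum_nonneg fun i _ => sq_nonneg _)
  rw [sum_eq_zero_iff_of_nonneg fun i _ => sq_nonneg _] at hsum
  funext i
  cases i using Fin.cases with
  | zero => exact h0
  | succ i => simpa using hsum i (mem_univ i)

lemma causalFD_or_causalFD_neg (hv : 0 ≤ mink n v v) (hne : v ≠ 0) :
    causalFD n v ∨ causalFD n (-v) := by
  rcases lt_trichotomy (v 0) 0 with h | h | h
  · exact Or.inr ⟨by rwa [mink_neg_left, mink_neg_right, neg_neg], by simpa⟩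
  · exact absurd (eq_zero_of_time_eq_zero hv h) hne
  · exact Or.inl ⟨hv, h⟩

-- Reverse Cauchy–Schwarz: `|ū · v̄| ≤ |ū| |v̄| < u₀ v₀`.
lemma mink_pos_of_timelike_of_causalFD (hu : 0 < mink n u u) (hu0 : 0 < u 0)
    (hv : causalFD n v) : 0 < mink n u v := by
  obtain ⟨hv, hv0⟩ := hv
  rw [mink_self] at hu hv
  have hcs := sum_mul_sq_le_sq_mul_sq univ (fun i : Fin n => u i.succ) (fun i => v i.succ)
  have hSu : 0 ≤ ∑ i : Fin n, u i.succ ^ 2 := sum_nonneg fun i _ => sq_nonneg _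
  have hsq : (∑ i : Fin n, u i.succ * v i.succ) ^ 2 < (u 0 * v 0) ^ 2 := by
    nlinarith [mul_le_mul_of_nonneg_left (sub_nonneg.1 hv) hSu, pow_pos hv0 2]
  rw [mink]
  linarith [(abs_lt_of_sq_lt_sq' hsq (by positivity)).2]

lemma mink_self_neg_of_orthogonal (hu : 0 < mink n u u) (hu0 : 0 < u 0)
    (huw : mink n u w = 0) (hw : w ≠ 0) : mink n w w < 0 := by
  by_contra! hww
  rcases causalFD_or_causalFD_neg hww hw with h | h
  · linarith [mink_pos_of_timelike_of_causalFD hu hu0 h]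
  · linarith [mink_neg_right u w ▸ mink_pos_of_timelike_of_causalFD hu hu0 h]

lemma eq_zero_or_causalFD (hu : 0 < mink n u u) (hu0 : 0 < u 0) (hx : 0 ≤ mink n x x)
    (hux : 0 ≤ mink n u x) : x = 0 ∨ causalFD n x := by
  refine or_iff_not_imp_left.2 fun hne => (causalFD_or_causalFD_neg hx hne).resolve_right ?_
  intro h
  linarith [mink_neg_right u x ▸ mink_pos_of_timelike_of_causalFD hu hu0 h]

end Causal

section Reflection

variable {n : ℕ} {u s : Fin (n + 1) → ℝ}

noncomputable def minkReflection (v x : Fin (n + 1) → ℝ) : Fin (n + 1) → ℝ :=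
  x - (2 * mink n v x / mink n v v) • v

lemma mink_minkReflection {v : Fin (n + 1) → ℝ} (hv : mink n v v ≠ 0) (x y : Fin (n + 1) → ℝ) :
    mink n (minkReflection v x) (minkReflection v y) = mink n x y := by
  simp only [minkReflection, mink_sub_left, mink_sub_right, mink_smul_left, mink_smul_right,
    mink_comm x v]
  field_simp
  ring

lemma minkReflection_of_mink_eq_zero {v x : Fin (n + 1) → ℝ} (h : mink n v x = 0) :
    minkReflection v x = x := by
  simp [minkReflection, h]

lemma minkReflection_sub_self {a b : Fin (n + 1) → ℝ} (hab : mink n a a = mink n b b)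
    (h : mink n (a - b) (a - b) ≠ 0) : minkReflection (a - b) a = b := by
  have h2 : 2 * mink n (a - b) a = mink n (a - b) (a - b) := by
    simp only [mink_sub_left, mink_sub_right, mink_comm b a]
    linarith
  rw [minkReflection, h2, div_self h, one_smul, sub_sub_cancel]

lemma exists_isometry_map {a b : Fin (n + 1) → ℝ} (hab : mink n a a = mink n b b)
    (hnull : mink n (a - b) (a - b) = 0 → a = b) :
    ∃ φ : (Fin (n + 1) → ℝ) → Fin (n + 1) → ℝ, (∀ x y, mink n (φ x) (φ y) = mink n x y) ∧
      φ a = b ∧ ∀ x, mink n (a - b) x = 0 → φ x = x := by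
  by_cases h : mink n (a - b) (a - b) = 0
  · exact ⟨id, fun _ _ => rfl, hnull h, fun _ _ => rfl⟩
  · exact ⟨minkReflection (a - b), mink_minkReflection h, minkReflection_sub_self hab h,
      fun _ => minkReflection_of_mink_eq_zero⟩

lemma exists_isometry_map_single_zero (hu : mink n u u = 1) :
    ∃ φ : (Fin (n + 1) → ℝ) → Fin (n + 1) → ℝ, (∀ x y, mink n (φ x) (φ y) = mink n x y) ∧
      φ (Pi.single 0 1) = u := by
  refine (exists_isometry_map (by rw [mink_single_zero_left, hu]; simp) fun hnull => ?_).imp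
    fun φ ⟨hφ, hφu, _⟩ => ⟨hφ, hφu⟩
  have hu0 : u 0 = 1 := by
    simp only [mink_sub_left, mink_sub_right, mink_single_zero_left, mink_comm u, hu,
      Pi.single_eq_same] at hnull
    linarith
  exact sub_eq_zero.1 (eq_zero_of_time_eq_zero hnull.ge (by simp [hu0]))

lemma exists_isONBasis_of_isometry {φ : (Fin (n + 1) → ℝ) → Fin (n + 1) → ℝ}
    (hφ : ∀ x y, mink n (φ x) (φ y) = mink n x y) (h0 : 0 < φ (Pi.single 0 1) 0) :
    ∃ b : Module.Basis (Fin (n + 1)) ℝ (Fin (n + 1) → ℝ),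
      IsONBasis n b ∧ ∀ i, b i = φ (Pi.single i 1) := by
  have hmetric : ∀ i j, mink n (φ (Pi.single i 1)) (φ (Pi.single j 1)) = minkowskiMetric n i j :=
    fun i j => by rw [hφ, mink_single_single]
  have hli : LinearIndependent ℝ fun i => φ (Pi.single i 1) :=
    (minkowskiForm n).linearIndependent_of_iIsOrtho
      (LinearMap.BilinForm.iIsOrtho_def.2 fun i j hij => by simp [hmetric, minkowskiMetric, hij])
      (fun i => by simp only [minkowskiForm_apply, hmetric, minkowskiMetric]; split_ifs <;> norm_num)
  classical
  refine ⟨basisOfPiSpaceOfLinearIndependent hli, ?_, by simp⟩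
  rw [isONBasis_iff]
  simpa using ⟨hmetric, h0⟩

lemma exists_isONBasis_map (j : Fin n) (hu : mink n u u = 1) (hu0 : 0 < u 0)
    (hs : mink n s s = -1) (hus : mink n u s = 0) :
    ∃ b : Module.Basis (Fin (n + 1)) ℝ (Fin (n + 1) → ℝ), IsONBasis n b ∧ b 0 = u ∧ b j.succ = s := by
  obtain ⟨φ, hφ, hφu⟩ := exists_isometry_map_single_zero hu
  set s' := φ (Pi.single j.succ 1)
  have hs' : mink n s' s' = -1 := by
    rw [hφ, mink_single_single]; simp [minkowskiMetric, Fin.succ_ne_zero]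
  have hus' : mink n u s' = 0 := by
    rw [← hφu, hφ, mink_single_single]; simp [minkowskiMetric, (Fin.succ_ne_zero j).symm]
  have hperp : mink n u (s' - s) = 0 := by rw [mink_sub_right, hus', hus, sub_self]
  obtain ⟨ψ, hψ, hψs, hψfix⟩ := exists_isometry_map (hs'.trans hs.symm) fun hnull =>
    sub_eq_zero.1 <| by_contra fun hne =>
      (mink_self_neg_of_orthogonal (by rw [hu]; norm_num) hu0 hperp hne).ne hnull
  have hψu : ψ u = u := hψfix u (by rw [mink_comm, hperp])
  obtain ⟨b, hb, hbφ⟩ := exists_isONBasis_of_isometry (φ := ψ ∘ φ)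
    (fun x y => (hψ _ _).trans (hφ x y)) (by simpa [hφu, hψu] using hu0)
  exact ⟨b, hb, by simp [hbφ, hφu, hψu], by simp [hbφ, s', hψs]⟩

end Reflection

section Dominance

variable {n : ℕ} (T : (Fin (n + 1) → ℝ) →ₗ[ℝ] (Fin (n + 1) → ℝ) →ₗ[ℝ] ℝ)

def IsDominant : Prop :=
  ∀ k₁ k₂, causalFD n k₁ → causalFD n k₂ → 0 ≤ T k₁ k₂

def IsBoundedByT00 : Prop :=
  ∀ b : Module.Basis (Fin (n + 1)) ℝ (Fin (n + 1) → ℝ), IsONBasis n b →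
    ∀ i j, |T (b i) (b j)| ≤ T (b 0) (b 0)

variable {T} {u x y : Fin (n + 1) → ℝ}

lemma IsDominant.apply_nonneg (hT : IsDominant T) (hu : 0 < mink n u u) (hu0 : 0 < u 0)
    (hx : 0 ≤ mink n x x) (hux : 0 ≤ mink n u x) (hy : 0 ≤ mink n y y) (huy : 0 ≤ mink n u y) :
    0 ≤ T x y := by
  rcases eq_zero_or_causalFD hu hu0 hx hux with rfl | hx
  · simp
  rcases eq_zero_or_causalFD hu hu0 hy huy with rfl | hy
  · simp
  exact hT x y hx hy

lemma IsONBasis.mink_add_smul_nonneg {b : Module.Basis (Fin (n + 1)) ℝ (Fin (n + 1) → ℝ)}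
    (hb : IsONBasis n b) (i : Fin (n + 1)) {σ : ℝ} (hσ : |σ| ≤ 1) :
    0 ≤ mink n (b 0 + σ • b i) (b 0 + σ • b i) ∧ 0 ≤ mink n (b 0) (b 0 + σ • b i) := by
  obtain ⟨hσ₁, hσ₂⟩ := abs_le.1 hσ
  simp only [mink_add_left, mink_add_right, mink_smul_left, mink_smul_right,
    (isONBasis_iff b).1 hb |>.1, minkowskiMetric]
  by_cases hi : i = 0
  · subst hi
    simp only [↓reduceIte, mul_one]
    constructor <;> nlinarith
  · simp only [↓reduceIte, hi, Ne.symm hi, mul_zero, mul_neg, mul_one, add_zero]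
    constructor <;> nlinarith

lemma IsDominant.isBoundedByT00 (hT : IsDominant T) : IsBoundedByT00 T := by
  intro b hb i j
  have hb00 : 0 < mink n (b 0) (b 0) := by rw [hb.1]; exact one_pos
  have key : ∀ σ τ : ℝ, |σ| ≤ 1 → |τ| ≤ 1 → 0 ≤ T (b 0 + σ • b i) (b 0 + τ • b j) :=
    fun σ τ hσ hτ => hT.apply_nonneg hb00 hb.2.2.2 (hb.mink_add_smul_nonneg i hσ).1
      (hb.mink_add_smul_nonneg i hσ).2 (hb.mink_add_smul_nonneg j hτ).1
      (hb.mink_add_smul_nonneg j hτ).2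
  have hpp := key 1 1 (by simp) (by simp)
  have hmm := key (-1) (-1) (by simp) (by simp)
  have hpm := key 1 (-1) (by simp) (by simp)
  have hmp := key (-1) 1 (by simp) (by simp)
  simp only [map_add, map_smul, LinearMap.add_apply, LinearMap.smul_apply, smul_eq_mul]
    at hpp hmm hpm hmp
  rw [abs_le]
  constructor <;> linarith

end Dominance

section Converse

variable {n : ℕ} [NeZero n] {T : (Fin (n + 1) → ℝ) →ₗ[ℝ] (Fin (n + 1) → ℝ) →ₗ[ℝ] ℝ}
  {u w k k₁ k₂ : Fin (n + 1) → ℝ}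

lemma exists_unit_spacelike_orthogonal (hu : mink n u u = 1) :
    ∃ s, mink n s s = -1 ∧ mink n u s = 0 := by
  obtain ⟨φ, hφ, hφu⟩ := exists_isometry_map_single_zero hu
  refine ⟨φ (Pi.single (0 : Fin n).succ 1), ?_, ?_⟩
  · rw [hφ, mink_single_single]; simp [minkowskiMetric]
  · rw [← hφu, hφ, mink_single_single]; simp [minkowskiMetric]

lemma exists_eq_smul_unit_spacelike (hu : mink n u u = 1) (hu0 : 0 < u 0)
    (huw : mink n u w = 0) :
    ∃ r : ℝ, ∃ s, 0 ≤ r ∧ mink n s s = -1 ∧ mink n u s = 0 ∧ w = r • s := by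
  by_cases hw : w = 0
  · obtain ⟨s, hs, hus⟩ := exists_unit_spacelike_orthogonal hu
    exact ⟨0, s, le_rfl, hs, hus, by simp [hw]⟩
  have hww := mink_self_neg_of_orthogonal (by rw [hu]; exact one_pos) hu0 huw hw
  have hr : 0 < √(-mink n w w) := Real.sqrt_pos.2 (by linarith)
  refine ⟨√(-mink n w w), (√(-mink n w w))⁻¹ • w, hr.le, ?_, ?_, ?_⟩
  · rw [mink_smul_left, mink_smul_right, ← mul_assoc, ← mul_inv, Real.mul_self_sqrt (by linarith),
      inv_mul_eq_div, div_neg, div_self hww.ne]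
  · rw [mink_smul_right, huw, mul_zero]
  · rw [smul_inv_smul₀ hr.ne']

lemma IsBoundedByT00.abs_apply_le (hT : IsBoundedByT00 T) (hu : mink n u u = 1)
    (hu0 : 0 < u 0) {s : Fin (n + 1) → ℝ} (hs : mink n s s = -1) (hus : mink n u s = 0) :
    |T u s| ≤ T u u := by
  obtain ⟨b, hb, rfl, hbs⟩ := exists_isONBasis_map (0 : Fin n) hu hu0 hs hus
  have h := hT b hb 0 (0 : Fin n).succ
  rwa [hbs] at h

lemma IsBoundedByT00.apply_nonneg_of_unit (hT : IsBoundedByT00 T) (hu : mink n u u = 1)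
    (hu0 : 0 < u 0) (hk : causalFD n k) : 0 ≤ T u k := by
  set a := mink n u k
  have ha : 0 < a := mink_pos_of_timelike_of_causalFD (by rw [hu]; exact one_pos) hu0 hk
  obtain ⟨r, s, hr, hs, hus, hw⟩ := exists_eq_smul_unit_spacelike hu hu0 (w := k - a • u)
    (by rw [mink_sub_right, mink_smul_right, hu, mul_one, sub_self])
  have hk' : k = a • u + r • s := by rw [← hw]; abel
  have hra : r ≤ a := by
    have hkk := hk.1
    rw [hk'] at hkk
    simp only [mink_add_left, mink_add_right, mink_smul_left, mink_smul_right, hu, hs, hus,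
      mink_comm s u] at hkk
    nlinarith
  obtain ⟨hTus₁, hTus₂⟩ := abs_le.1 (hT.abs_apply_le hu hu0 hs hus)
  calc 0 ≤ (a - r) * T u u := mul_nonneg (by linarith) (by linarith)
    _ ≤ a * T u u + r * T u s := by nlinarith
    _ = T u k := by rw [hk']; simp

lemma IsBoundedByT00.apply_nonneg_of_timelike (hT : IsBoundedByT00 T) (hk₁ : 0 < mink n k₁ k₁)
    (hk₁0 : 0 < k₁ 0) (hk₂ : causalFD n k₂) : 0 ≤ T k₁ k₂ := by
  have hc : 0 < √(mink n k₁ k₁) := Real.sqrt_pos.2 hk₁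
  have hu : mink n ((√(mink n k₁ k₁))⁻¹ • k₁) ((√(mink n k₁ k₁))⁻¹ • k₁) = 1 := by
    rw [mink_smul_left, mink_smul_right, ← mul_assoc, ← mul_inv, Real.mul_self_sqrt hk₁.le]
    field_simp
  have h := hT.apply_nonneg_of_unit hu (by simpa using mul_pos (inv_pos.2 hc) hk₁0) hk₂
  simp only [map_smul, LinearMap.smul_apply, smul_eq_mul] at h
  exact nonneg_of_mul_nonneg_right h (inv_pos.2 hc)

lemma IsBoundedByT00.isDominant (hT : IsBoundedByT00 T) : IsDominant T := by
  intro k₁ k₂ hk₁ hk₂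
  refine nonneg_of_forall_pos_nonneg_add_mul (b := T (Pi.single 0 1) k₂) fun ε hε => ?_
  have h := hT.apply_nonneg_of_timelike (k₁ := k₁ + ε • Pi.single 0 1) ?_ ?_ hk₂
  · simpa using h
  · simp only [mink_add_left, mink_add_right, mink_smul_left, mink_smul_right,
      mink_single_zero_left, mink_comm k₁, Pi.single_eq_same, mul_one]
    nlinarith [hk₁.1, hk₁.2]
  · simpa using add_pos hk₁.2 hε

end Converse

/-- a 2-covariant tensor `T` has the dominant property iff in every
    orthonormal basis its components satisfy `T₀₀ ≥ |T_{ij}|` for all index pairs. -/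
theorem dominant_property_iff_orthonormal_components (n : ℕ) (hn : 1 ≤ n)
    (T : (Fin (n + 1) → ℝ) →ₗ[ℝ] (Fin (n + 1) → ℝ) →ₗ[ℝ] ℝ) :
    (∀ k₁ k₂, causalFD n k₁ → causalFD n k₂ → 0 ≤ T k₁ k₂) ↔
      (∀ b : Module.Basis (Fin (n + 1)) ℝ (Fin (n + 1) → ℝ), IsONBasis n b →
        ∀ i j, |T (b i) (b j)| ≤ T (b 0) (b 0)) := by
  have : NeZero n := ⟨by omega⟩
  exact ⟨IsDominant.isBoundedByT00, IsBoundedByT00.isDominant⟩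
end

section
/- A 2-covariant tensor T satisfies T(k₁,k₂) ≥ 0 for all causal future-directed vectors k₁, k₂ if and only if T(X,Y) ≥ 0 for all null future-directed vectors X, Y. -/
/-- Null future-directed vector. -/
def nullFD (n : ℕ) (v : Fin (n + 1) → ℝ) : Prop :=
  mink n v v = 0 ∧ 0 < v 0

open Matrix

lemma PointedCone.nonneg_of_mem_hull {R M : Type*} [CommSemiring R] [PartialOrder R]
    [IsOrderedRing R] [AddCommMonoid M] [Module R M] {p : M →ₗ[R] M →ₗ[R] R} {s : Set M}
    (hs : ∀ x ∈ s, ∀ y ∈ s, 0 ≤ p x y) {x y : M} (hx : x ∈ hull R s) (hy : y ∈ hull R s) :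
    0 ≤ p x y := by
  have hy' : y ∈ dual p (hull R s) := by
    rw [dual_hull]
    exact (Submodule.span_le (p := dual p s)).mpr (fun y hy x hx => hs x hx y hy) hy
  exact hy' hx

lemma mink_cons (n : ℕ) (a b : ℝ) (w z : Fin n → ℝ) :
    mink n (Fin.cons a w) (Fin.cons b z) = a * b - w ⬝ᵥ z := by
  simp [mink, dotProduct]

lemma nullFD.causalFD {n : ℕ} {v : Fin (n + 1) → ℝ} (h : nullFD n v) : causalFD n v :=
  ⟨h.1.ge, h.2⟩

lemma nullFD_cons_one {n : ℕ} {u : Fin n → ℝ} (hu : u ⬝ᵥ u = 1) :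
    nullFD n (Fin.cons 1 u) :=
  ⟨by rw [mink_cons, hu]; ring, by simp⟩

lemma exists_dotProduct_self_eq_one_smul_eq {n : ℕ} [NeZero n] (w : Fin n → ℝ) :
    ∃ u : Fin n → ℝ, u ⬝ᵥ u = 1 ∧ w = √(w ⬝ᵥ w) • u := by
  by_cases hw : w = 0
  · exact ⟨Pi.single 0 1, by simp, by simp [hw]⟩
  have hpos : 0 < w ⬝ᵥ w :=
    lt_of_le_of_ne (dotProduct_self_star_nonneg w) (Ne.symm (dotProduct_self_eq_zero.not.mpr hw))
  refine ⟨(√(w ⬝ᵥ w))⁻¹ • w, ?_, ?_⟩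
  · rw [smul_dotProduct, dotProduct_smul, smul_eq_mul, smul_eq_mul, ← mul_assoc, ← sq,
      inv_pow, Real.sq_sqrt hpos.le, inv_mul_cancel₀ hpos.ne']
  · rw [smul_smul, mul_inv_cancel₀ (Real.sqrt_pos.mpr hpos).ne', one_smul]

lemma causalFD.mem_hull_nullFD {n : ℕ} [NeZero n] {k : Fin (n + 1) → ℝ} (hk : causalFD n k) :
    k ∈ PointedCone.hull ℝ {X | nullFD n X} := by
  obtain ⟨u, hu, hk_tail⟩ := exists_dotProduct_self_eq_one_smul_eq (Fin.tail k)
  set s := √(Fin.tail k ⬝ᵥ Fin.tail k)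
  have hs_le : s ≤ k 0 := by
    have := hk.1
    rw [← Fin.cons_self_tail k, mink_cons] at this
    exact Real.sqrt_le_iff.mpr ⟨hk.2.le, by simpa [sq] using this⟩
  have hk_eq : k = ((k 0 + s) / 2) • Fin.cons 1 u + ((k 0 - s) / 2) • Fin.cons 1 (-u) := by
    conv_lhs => rw [← Fin.cons_self_tail k, hk_tail]
    ext i
    refine Fin.cases ?_ (fun i => ?_) i
    · simp only [Fin.cons_zero, Pi.add_apply, Pi.smul_apply, smul_eq_mul, mul_one]
      ring
    · simp only [Fin.cons_succ, Pi.smul_apply, smul_eq_mul, Pi.add_apply, Pi.neg_apply, mul_neg]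
      ring
  rw [hk_eq]
  exact add_mem
    (PointedCone.smul_mem _ (by linarith [hk.2, Real.sqrt_nonneg (Fin.tail k ⬝ᵥ Fin.tail k)])
      (PointedCone.subset_hull (nullFD_cons_one hu)))
    (PointedCone.smul_mem _ (by linarith)
      (PointedCone.subset_hull (nullFD_cons_one (by simpa using hu))))

/-- `T` is nonnegative on all pairs of causal future-directed vectors
    iff it is nonnegative on all pairs of null future-directed vectors. -/
theorem dominant_property_iff_nonneg_on_null (n : ℕ) (hn : 1 ≤ n)
    (T : (Fin (n + 1) → ℝ) →ₗ[ℝ] (Fin (n + 1) → ℝ) →ₗ[ℝ] ℝ) :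
    (∀ k₁ k₂, causalFD n k₁ → causalFD n k₂ → 0 ≤ T k₁ k₂) ↔
      (∀ X Y, nullFD n X → nullFD n Y → 0 ≤ T X Y) := by
  have : NeZero n := ⟨Nat.one_le_iff_ne_zero.mp hn⟩
  refine ⟨fun h X Y hX hY => h X Y hX.causalFD hY.causalFD, fun h k₁ k₂ hk₁ hk₂ => ?_⟩
  exact PointedCone.nonneg_of_mem_hull (fun X hX Y hY => h X Y hX hY)
    hk₁.mem_hull_nullFD hk₂.mem_hull_nullFD
end
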